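/- arXiv:1811.02490 — 2 statements merged into one kernel-verified Lean document; each statement's English description precedes it below -/
import Mathlib

section
/- At t = 1, Catalan operators reduce to multiplication by Catalan functions: for any indexed root ideal (Ψ,μ) and any g ∈ Λ_ℤ, the specialized operator satisfies H^Ψ_μ|_{t=1}(g) = (H^Ψ_μ|_{t=1}(1))·g = H(Ψ;μ)(x;1)·g. -/
open scoped BigOperators Classical

noncomputable section

/-- The coefficient ring `ℤ[t]`, with `t = Polynomial.X`. -/
abbrev CR : Type := Polynomial ℤ

/-- The ring of symmetric functions `Λ = ℤ[t][h₁,h₂,…]`, modeled as the polynomial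
ring over `ℤ[t]` in countably many variables, where the variable `X n`
represents the complete homogeneous symmetric function `h_{n+1}`. -/
abbrev SymF : Type := MvPolynomial ℕ CR

/-- `t` as an element of `Λ`. -/
def tC : SymF := MvPolynomial.C Polynomial.X

/-- The complete homogeneous symmetric function `h_d` for `d : ℤ`:
`h_0 = 1` and `h_d = 0` for `d < 0`. -/
def hh (d : ℤ) : SymF :=
  if d < 0 then 0 else if d = 0 then 1 else MvPolynomial.X (d.toNat - 1)

/-- The (possibly non-partition-indexed) Schur function
`s_γ = det (h_{γ_i + j - i})_{1 ≤ i,j ≤ ℓ}`. -/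
def schur {ℓ : ℕ} (γ : Fin ℓ → ℤ) : SymF :=
  (Matrix.of fun i j : Fin ℓ => hh (γ i + (j : ℤ) - (i : ℤ))).det

/-- The poset of positive roots `Δ⁺_ℓ = {(i,j) : 1 ≤ i < j ≤ ℓ}` (0-based here). -/
def Dplus (ℓ : ℕ) : Finset (Fin ℓ × Fin ℓ) := Finset.univ.filter fun p => p.1 < p.2

/-- `Ψ` is a root ideal: an upper order ideal of `Δ⁺_ℓ`, where
`(a,b) ≤ (c,d)` iff `a ≥ c` and `b ≤ d`. -/
def IsRootIdeal {ℓ : ℕ} (Ψ : Finset (Fin ℓ × Fin ℓ)) : Prop :=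
  Ψ ⊆ Dplus ℓ ∧ ∀ p ∈ Ψ, ∀ q ∈ Dplus ℓ, q.1 ≤ p.1 → p.2 ≤ q.2 → q ∈ Ψ

/-- The Catalan function `H(Ψ;γ) = ∏_{(i,j) ∈ Ψ} (1 - t R_{ij})⁻¹ s_γ`, written out
as the (finitely supported) sum over all ways `n` of applying raising operators
`R_{ij}` with `(i,j) ∈ Ψ`. -/
def catalanFn {ℓ : ℕ} (Ψ : Finset (Fin ℓ × Fin ℓ)) (γ : Fin ℓ → ℤ) : SymF :=
  ∑ᶠ n : Fin ℓ × Fin ℓ → ℕ,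
    if ∀ p, p ∉ Ψ → n p = 0 then
      tC ^ (∑ p : Fin ℓ × Fin ℓ, n p) *
        schur (fun a => γ a + ∑ p : Fin ℓ × Fin ℓ,
          (n p : ℤ) * ((if p.1 = a then 1 else 0) - (if p.2 = a then 1 else 0)))
    else 0

/-- `nr(Ψ)_i`: the number of non-roots of `Ψ` in row `i` (0-based row index,
extended by `0` out of range). -/
def nrN {ℓ : ℕ} (Ψ : Finset (Fin ℓ × Fin ℓ)) (i : ℕ) : ℕ :=
  ((Dplus ℓ \ Ψ).filter fun p => (p.1 : ℕ) = i).card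

/-- `μ ∈ Par^k_ℓ`: a partition with at most `ℓ` parts, all of size at most `k`. -/
def IsPartitionK (k : ℕ) {ℓ : ℕ} (μ : Fin ℓ → ℕ) : Prop :=
  (∀ i j : Fin ℓ, i ≤ j → μ j ≤ μ i) ∧ ∀ i, μ i ≤ k

/-- The root ideal `Δᵏ(μ) = {(i,j) ∈ Δ⁺_ℓ : k - μ_i + i < j}` (1-based), here with
0-based indices. -/
def Dk (k : ℕ) {ℓ : ℕ} (μ : Fin ℓ → ℕ) : Finset (Fin ℓ × Fin ℓ) :=
  (Dplus ℓ).filter fun p => (k : ℤ) - μ p.1 + (p.1 : ℤ) < (p.2 : ℤ)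

/-- The `k`-Schur Catalan function `s^{(k)}_μ = H(Δᵏ(μ); μ)`. -/
def kSchur (k : ℕ) {ℓ : ℕ} (μ : Fin ℓ → ℕ) : SymF :=
  catalanFn (Dk k μ) fun i => (μ i : ℤ)

/-- The modified Hall–Littlewood polynomial `H_μ(x;t) = H(Δ⁺;μ)`. -/
def hallLittlewood {ℓ : ℕ} (μ : Fin ℓ → ℕ) : SymF :=
  catalanFn (Dplus ℓ) fun i => (μ i : ℤ)

/-- `Λᵏ`, the `ℤ[t]`-span of the modified Hall–Littlewood polynomials `H_μ`
for `μ ∈ Par^k`. -/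
def LambdaK (k : ℕ) : Submodule CR SymF :=
  Submodule.span CR {f | ∃ (ℓ : ℕ) (μ : Fin ℓ → ℕ),
    IsPartitionK k μ ∧ (∀ i, 0 < μ i) ∧ f = hallLittlewood μ}

/-- Extend a finite tuple by zeros. -/
def extendFin {ℓ : ℕ} (μ : Fin ℓ → ℕ) : ℕ → ℕ := fun i => if h : i < ℓ then μ ⟨i, h⟩ else 0

/-- Extend a finite integer tuple by zeros. -/
def extendFinZ {ℓ : ℕ} (γ : Fin ℓ → ℤ) : ℕ → ℤ := fun i => if h : i < ℓ then γ ⟨i, h⟩ else 0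

/-- `style(Ψ,γ)_i = nr(Ψ)_i + γ_i` (0-based row index `i`). -/
def styleZN {ℓ : ℕ} (Ψ : Finset (Fin ℓ × Fin ℓ)) (γ : Fin ℓ → ℤ) (i : ℕ) : ℤ :=
  (nrN Ψ i : ℤ) + extendFinZ γ i


section Operators

/-- The generating series `∑_j (h_j^⊥ f) u^j` of the skewing operators `h_j^⊥`
(the adjoints of multiplication by `h_j` for the Hall inner product), as the
`ℤ[t]`-algebra map determined by `h_n ↦ ∑_{j=0}^{n} h_{n-j} u^j`. -/
def hPerpSeries : SymF →ₐ[CR] Polynomial SymF :=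
  MvPolynomial.aeval fun n : ℕ =>
    ∑ j ∈ Finset.range (n + 2), Polynomial.C (hh ((n : ℤ) + 1 - j)) * Polynomial.X ^ j

/-- The skewing operator `h_j^⊥`. -/
def hPerp (j : ℕ) (f : SymF) : SymF := (hPerpSeries f).coeff j

/-- The generating series `∑_i (e_i^⊥ f) u^i` of the skewing operators `e_i^⊥`
(the adjoints of multiplication by the elementary symmetric functions `e_i`),
as the `ℤ[t]`-algebra map determined by `h_n ↦ h_n + h_{n-1} u`. -/
def ePerpSeries : SymF →ₐ[CR] Polynomial SymF :=
  MvPolynomial.aeval fun n : ℕ =>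
    Polynomial.C (hh ((n : ℤ) + 1)) + Polynomial.C (hh (n : ℤ)) * Polynomial.X

/-- The skewing operator `e_i^⊥`. -/
def ePerp (i : ℕ) (f : SymF) : SymF := (ePerpSeries f).coeff i

/-- The Garsia–Jing vertex operator `B_m = ∑_{i,j ≥ 0} (-1)^i t^j h_{m+i+j} e_i^⊥ h_j^⊥`. -/
def GJ (m : ℤ) (f : SymF) : SymF :=
  ∑ᶠ (i : ℕ) (j : ℕ), (-1 : SymF) ^ i * tC ^ j * hh (m + i + j) * ePerp i (hPerp j f)

/-- `B̃_γ = B_{γ_1} B_{γ_2} ⋯ B_{γ_ℓ}` (composition of Garsia–Jing operators). -/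
def GJt {ℓ : ℕ} (γ : Fin ℓ → ℤ) (f : SymF) : SymF := (List.ofFn γ).foldr GJ f

/-- The Catalan operator `H^Ψ_γ = ∏_{(i,j) ∈ Δ⁺_ℓ \ Ψ} (1 - t 𝐑_{ij}) B̃_γ`,
expanded as a finite signed sum over subsets of `Δ⁺_ℓ \ Ψ`. -/
def catalanOp {ℓ : ℕ} (Ψ : Finset (Fin ℓ × Fin ℓ)) (γ : Fin ℓ → ℤ) (f : SymF) : SymF :=
  ∑ S ∈ (Dplus ℓ \ Ψ).powerset, (-1 : SymF) ^ S.card * tC ^ S.card *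
    GJt (fun a => γ a + ∑ p ∈ S,
      ((if p.1 = a then 1 else 0) - (if p.2 = a then (1 : ℤ) else 0))) f

/-- The generalized Hall–Littlewood vertex operator
`B_γ = ∏_{(i,j) ∈ Δ⁺_ℓ} (1 - t 𝐑_{ij}) B̃_γ = H^∅_γ`. -/
def vertexB {ℓ : ℕ} (γ : Fin ℓ → ℤ) : SymF → SymF :=
  catalanOp (∅ : Finset (Fin ℓ × Fin ℓ)) γ

/-- The root ideal `Ψ ⊎ Φ ⊆ Δ⁺_{r+m}`, determined by
`Δ⁺_{r+m} \ (Ψ ⊎ Φ) = (Δ⁺_r \ Ψ) ⊔ {(i+r, j+r) : (i,j) ∈ Δ⁺_m \ Φ}`. -/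
def uplus {r m : ℕ} (Ψ : Finset (Fin r × Fin r)) (Φ : Finset (Fin m × Fin m)) :
    Finset (Fin (r + m) × Fin (r + m)) :=
  (Dplus (r + m)).filter fun p =>
    ¬((∃ q : Fin r × Fin r, q ∉ Ψ ∧ q.1 < q.2 ∧
          (p.1 : ℕ) = (q.1 : ℕ) ∧ (p.2 : ℕ) = (q.2 : ℕ)) ∨
      (∃ q : Fin m × Fin m, q ∉ Φ ∧ q.1 < q.2 ∧
          (p.1 : ℕ) = (q.1 : ℕ) + r ∧ (p.2 : ℕ) = (q.2 : ℕ) + r))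

/-- `Λ_ℤ = ℤ[h₁,h₂,…] = Λ/(t-1)`. -/
abbrev SymFZ : Type := MvPolynomial ℕ ℤ

/-- The specialization `t = 1`, i.e. the canonical projection `Λ → Λ/(t-1) = Λ_ℤ`. -/
def specT1 : SymF →+* SymFZ := MvPolynomial.map (Polynomial.evalRingHom 1)

end Operators

/-!
At `t = 1` the Garsia–Jing operator `B_m` becomes multiplication by `h_m`: it is
`∑_n h_{m+n} [u^n] E^⊥(-u) H^⊥(u)`, and `E^⊥(-u) H^⊥(u) = 1`. Hence `H^Ψ_μ|_{t=1}` is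
multiplication by `∏_{(i,j) ∈ Δ⁺ \ Ψ} (1 - R_{ij}) h_μ`, where raising operators act on the products
`h_γ = h_{γ_1} ⋯ h_{γ_ℓ}` through the group ring `ℤ[ℤ^ℓ]`.

On the other side, Jacobi–Trudi is the Vandermonde identity `s_γ = ∏_{i<j} (1 - R_{ij}) h_γ`, so
`H(Ψ;μ)(x;1) = ∏_Ψ (1 - R_{ij})⁻¹ ∏_{Δ⁺} (1 - R_{ij}) h_μ`, and the factors over `Ψ` cancel. To make
this rigorous, truncate the geometric series at `R^N`: raising operators lower the weight
`∑_a a γ_a`, and `h_γ` vanishes once that weight is negative, so the remainder terms vanish for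
large `N`.
-/

open Finset Polynomial

lemma specT1_tC : specT1 tC = 1 := by
  simp [specT1, tC]

lemma hh_of_neg {d : ℤ} (hd : d < 0) : hh d = 0 := if_pos hd

lemma hh_natCast_add_one (n : ℕ) : hh ((n : ℤ) + 1) = MvPolynomial.X n := by
  rw [hh, if_neg (by omega), if_neg (by omega), show ((n : ℤ) + 1).toNat - 1 = n by omega]

lemma Polynomial.coeff_comp_neg_X {R : Type*} [CommRing R] (p : R[X]) (n : ℕ) :
    (p.comp (-X)).coeff n = (-1) ^ n * p.coeff n := by
  induction p using Polynomial.induction_on' with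
  | add p q hp hq => simp [add_comp, hp, hq, mul_add]
  | monomial k a =>
    rw [← C_mul_X_pow_eq_monomial, mul_comp, C_comp, pow_comp, X_comp, neg_pow, ← mul_assoc,
      ← C_1, ← C_neg, ← C_pow, ← C_mul, coeff_C_mul_X_pow, coeff_C_mul_X_pow]
    split_ifs with h
    · subst h; ring
    · simp

lemma Polynomial.coeff_eval₂_X {R S : Type*} [Semiring R] [Semiring S] (φ : R →+* S[X])
    (p : R[X]) (n : ℕ) :
    (p.eval₂ φ X).coeff n = ∑ x ∈ antidiagonal n, (φ (p.coeff x.2)).coeff x.1 := by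
  simp_rw [eval₂_eq_sum, Polynomial.sum_def, finsetSum_coeff, coeff_mul, coeff_X_pow,
    mul_ite, mul_one, mul_zero]
  rw [Finset.sum_comm]
  refine Finset.sum_congr rfl fun x _ => ?_
  rw [Finset.sum_ite_eq]
  split_ifs with h
  · rfl
  · rw [notMem_support_iff.mp h, map_zero, coeff_zero]

def ePerpSeriesNeg : SymF →+* SymF[X] := (compRingHom (-X)).comp ePerpSeries.toRingHom

lemma coeff_ePerpSeriesNeg (g : SymF) (i : ℕ) :
    (ePerpSeriesNeg g).coeff i = (-1) ^ i * ePerp i g :=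
  Polynomial.coeff_comp_neg_X _ i

lemma ePerpSeriesNeg_hh (d : ℤ) :
    ePerpSeriesNeg (hh d) = C (hh d) - C (hh (d - 1)) * X := by
  rcases lt_trichotomy d 0 with hd | rfl | hd
  · rw [hh_of_neg hd, hh_of_neg (by omega), map_zero, map_zero]
    ring
  · rw [hh_of_neg (show (0 : ℤ) - 1 < 0 by norm_num), show hh 0 = 1 from rfl, map_one, map_one,
      map_zero]
    ring
  · obtain ⟨n, rfl⟩ : ∃ n : ℕ, d = n + 1 := ⟨(d - 1).toNat, by omega⟩
    rw [add_sub_cancel_right, hh_natCast_add_one]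
    simp only [ePerpSeriesNeg, ePerpSeries, RingHom.comp_apply, AlgHom.toRingHom_eq_coe,
      RingHom.coe_coe, MvPolynomial.aeval_X, hh_natCast_add_one,
      coe_compRingHom_apply, add_comp, mul_comp, C_comp, X_comp]
    ring

/-- On a generator `h_{n+1}` the sum `∑_j E^⊥(-u) (h_{n+1-j}) u^j` telescopes. -/
theorem eval₂_ePerpSeriesNeg_hPerpSeries (f : SymF) :
    (hPerpSeries f).eval₂ ePerpSeriesNeg X = C f := by
  suffices h : (eval₂RingHom ePerpSeriesNeg X).comp hPerpSeries.toRingHom = C from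
    congrArg (· f) h
  refine MvPolynomial.ringHom_ext (fun r => ?_) (fun n => ?_)
  · have hH : hPerpSeries (MvPolynomial.C r) = C (MvPolynomial.C r) := hPerpSeries.commutes r
    have hE : ePerpSeries (MvPolynomial.C r) = C (MvPolynomial.C r) := ePerpSeries.commutes r
    simp [hH, ePerpSeriesNeg, hE]
  · have tele := Finset.sum_range_sub' (fun j => C (hh ((n : ℤ) + 1 - j)) * X ^ j) (n + 2)
    simp only [RingHom.comp_apply, AlgHom.toRingHom_eq_coe, RingHom.coe_coe, hPerpSeries,
      MvPolynomial.aeval_X, map_sum, map_mul, map_pow, coe_eval₂RingHom, eval₂_C, eval₂_X,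
      ePerpSeriesNeg_hh]
    convert tele using 1
    · refine Finset.sum_congr rfl fun j _ => ?_
      push_cast
      ring_nf
    · rw [hh_of_neg (by push_cast; omega : (n : ℤ) + 1 - ((n + 2 : ℕ) : ℤ) < 0), Nat.cast_zero,
        sub_zero, hh_natCast_add_one, map_zero]
      ring

theorem sum_antidiagonal_ePerp_hPerp (f : SymF) (n : ℕ) :
    ∑ x ∈ antidiagonal n, (-1) ^ x.1 * ePerp x.1 (hPerp x.2 f) = if n = 0 then f else 0 := by
  have h := congrArg (coeff · n) (eval₂_ePerpSeriesNeg_hPerpSeries f)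
  simp only [coeff_eval₂_X, coeff_ePerpSeriesNeg, coeff_C] at h
  exact h

lemma exists_ePerp_hPerp_eq_zero (f : SymF) :
    ∃ K, ∀ i j, K ≤ i ∨ K ≤ j → ePerp i (hPerp j f) = 0 := by
  set J := (hPerpSeries f).natDegree
  set I := (range (J + 1)).sup fun j => (ePerpSeries (hPerp j f)).natDegree
  refine ⟨max I J + 1, fun i j hij => ?_⟩
  by_cases hj : J < j
  · rw [hPerp, coeff_eq_zero_of_natDegree_lt hj, ePerp, map_zero, coeff_zero]
  · refine coeff_eq_zero_of_natDegree_lt (lt_of_le_of_lt ?_ (show I < i by omega))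
    exact Finset.le_sup (f := fun j => (ePerpSeries (hPerp j f)).natDegree)
      (mem_range.mpr (by omega))

lemma GJ_eq_sum_range (m : ℤ) (f : SymF) {K : ℕ}
    (hK : ∀ i j, K ≤ i ∨ K ≤ j → ePerp i (hPerp j f) = 0) :
    GJ m f = ∑ i ∈ range K, ∑ j ∈ range K,
      (-1 : SymF) ^ i * tC ^ j * hh (m + i + j) * ePerp i (hPerp j f) := by
  have inner : ∀ i : ℕ,
      ∑ᶠ j : ℕ, (-1 : SymF) ^ i * tC ^ j * hh (m + i + j) * ePerp i (hPerp j f) =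
        ∑ j ∈ range K, (-1 : SymF) ^ i * tC ^ j * hh (m + i + j) * ePerp i (hPerp j f) := by
    refine fun i => finsum_eq_sum_of_support_subset _ fun j hj => ?_
    by_contra hjK
    simp_all
  rw [GJ, finsum_congr inner]
  refine finsum_eq_sum_of_support_subset _ fun i hi => ?_
  by_contra hiK
  exact hi (Finset.sum_eq_zero fun j _ => by simp_all)

lemma sum_range_hh_mul_ePerp_hPerp (m : ℤ) (f : SymF) {K : ℕ}
    (hK : ∀ i j, K ≤ i ∨ K ≤ j → ePerp i (hPerp j f) = 0) :
    ∑ i ∈ range K, ∑ j ∈ range K, (-1 : SymF) ^ i * hh (m + i + j) * ePerp i (hPerp j f) =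
      hh m * f := by
  rw [← Finset.sum_product', ← Finset.sum_fiberwise_of_maps_to (g := fun x => x.1 + x.2)
    (t := range (2 * K + 1)) fun x hx => by simp only [mem_product, mem_range] at hx ⊢; omega]
  have fiber : ∀ n, ∑ x ∈ (range K ×ˢ range K).filter (fun x => x.1 + x.2 = n),
      (-1 : SymF) ^ x.1 * hh (m + x.1 + x.2) * ePerp x.1 (hPerp x.2 f) =
        hh (m + n) * if n = 0 then f else 0 := by
    intro n
    rw [← sum_antidiagonal_ePerp_hPerp, Finset.mul_sum]
    calc _ = ∑ x ∈ (range K ×ˢ range K).filter (fun x => x.1 + x.2 = n),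
          hh (m + n) * ((-1) ^ x.1 * ePerp x.1 (hPerp x.2 f)) := by
            refine Finset.sum_congr rfl fun x hx => ?_
            rw [← (mem_filter.mp hx).2, Nat.cast_add, ← add_assoc]
            ring
      _ = _ := by
            refine Finset.sum_subset (fun x hx => ?_) fun x hx hx' => ?_
            · simp_all
            · simp only [mem_filter, mem_product, mem_range, HasAntidiagonal.mem_antidiagonal]
                at hx hx'
              rw [hK x.1 x.2 (by omega), mul_zero, mul_zero]
  simp_rw [fiber]
  rw [Finset.sum_eq_single_of_mem 0 (by simp) fun n _ hn => by rw [if_neg hn, mul_zero]]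
  simp

theorem specT1_GJ (m : ℤ) (f : SymF) : specT1 (GJ m f) = specT1 (hh m * f) := by
  obtain ⟨K, hK⟩ := exists_ePerp_hPerp_eq_zero f
  rw [GJ_eq_sum_range m f hK, ← sum_range_hh_mul_ePerp_hPerp m f hK]
  simp [specT1_tC]

section RaisingOperators

variable {ℓ : ℕ}

def hProd (γ : Fin ℓ → ℤ) : SymF := ∏ a, hh (γ a)

lemma specT1_GJt (γ : Fin ℓ → ℤ) (f : SymF) :
    specT1 (GJt γ f) = specT1 (hProd γ * f) := by
  suffices h : ∀ L : List ℤ, specT1 (L.foldr GJ f) = specT1 ((L.map hh).prod * f) by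
    rw [GJt, h, List.map_ofFn, List.prod_ofFn, hProd]
    rfl
  intro L
  induction L with
  | nil => simp
  | cons d L ih => simp only [List.foldr_cons, specT1_GJ, List.map_cons, List.prod_cons, map_mul,
      ih, mul_assoc]

lemma AddMonoidAlgebra.prod_one_sub_single {ι M R : Type*} [AddCommMonoid M] [CommRing R]
    (s : Finset ι) (v : ι → M) :
    ∏ i ∈ s, (1 - AddMonoidAlgebra.single (v i) (1 : R)) =
      ∑ t ∈ s.powerset, AddMonoidAlgebra.single (∑ i ∈ t, v i) ((-1) ^ t.card) := by
  simp_rw [sub_eq_neg_add, ← AddMonoidAlgebra.single_neg, Finset.prod_add, prod_const_one,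
    mul_one, AddMonoidAlgebra.prod_single, prod_const]

/-- The group ring `ℤ[ℤ^ℓ]`, in which `single v 1` stands for the raising operator `R^v`. -/
abbrev RaisingAlgebra (ℓ : ℕ) : Type := AddMonoidAlgebra ℤ (Fin ℓ → ℤ)

def rootVec (p : Fin ℓ × Fin ℓ) : Fin ℓ → ℤ := Pi.single p.1 1 - Pi.single p.2 1

lemma rootVec_apply (p : Fin ℓ × Fin ℓ) (a : Fin ℓ) :
    rootVec p a = (if p.1 = a then 1 else 0) - (if p.2 = a then 1 else 0) := by
  simp [rootVec, Pi.single_apply, eq_comm]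

def raisingOp (p : Fin ℓ × Fin ℓ) : RaisingAlgebra ℓ :=
  AddMonoidAlgebra.single (rootVec p) 1

def rowWeight (ℓ : ℕ) : (Fin ℓ → ℤ) →+ ℤ :=
  AddMonoidHom.mk' (fun v => ∑ a : Fin ℓ, ((a : ℕ) : ℤ) * v a) fun v w => by
    simp [mul_add, sum_add_distrib]

lemma rowWeight_apply (v : Fin ℓ → ℤ) :
    rowWeight ℓ v = ∑ a : Fin ℓ, ((a : ℕ) : ℤ) * v a := rfl

lemma rowWeight_nonneg {v : Fin ℓ → ℤ} (hv : ∀ a, 0 ≤ v a) : 0 ≤ rowWeight ℓ v :=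
  rowWeight_apply v ▸ Finset.sum_nonneg fun a _ => mul_nonneg (Nat.cast_nonneg _) (hv a)

lemma rowWeight_rootVec (p : Fin ℓ × Fin ℓ) : rowWeight ℓ (rootVec p) = p.1 - p.2 := by
  simp [rowWeight_apply, rootVec_apply, mul_sub]

lemma rowWeight_rootVec_le {p : Fin ℓ × Fin ℓ} (hp : p ∈ Dplus ℓ) :
    rowWeight ℓ (rootVec p) ≤ -1 := by
  simp only [Dplus, mem_filter, mem_univ, true_and] at hp
  rw [rowWeight_rootVec]
  have := Fin.lt_def.mp hp
  omega

/-- `x ↦ x(R) h_γ` at `t = 1`. -/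
def raisingAction (γ : Fin ℓ → ℤ) : RaisingAlgebra ℓ →+ SymFZ :=
  AddMonoidAlgebra.liftNC (Int.castAddHom SymFZ) fun v => specT1 (hProd (γ + v.toAdd))

lemma raisingAction_single (γ v : Fin ℓ → ℤ) (c : ℤ) :
    raisingAction γ (AddMonoidAlgebra.single v c) = c * specT1 (hProd (γ + v)) := by
  simp [raisingAction]

lemma raisingAction_single_mul (γ w : Fin ℓ → ℤ) (x : RaisingAlgebra ℓ) :
    raisingAction γ (AddMonoidAlgebra.single w 1 * x) = raisingAction (γ + w) x := by
  induction x using AddMonoidAlgebra.induction_linear with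
  | zero => simp
  | add x y hx hy => rw [mul_add, map_add, map_add, hx, hy]
  | single v c => rw [AddMonoidAlgebra.single_mul_single, one_mul, raisingAction_single,
      raisingAction_single, add_assoc]

lemma raisingAction_single_eq_zero {γ v : Fin ℓ → ℤ} (h : rowWeight ℓ (γ + v) < 0)
    (c : ℤ) : raisingAction γ (AddMonoidAlgebra.single v c) = 0 := by
  obtain ⟨a, ha⟩ : ∃ a, (γ + v) a < 0 := by
    by_contra! hnn
    exact h.not_ge (rowWeight_nonneg hnn)
  rw [raisingAction_single, hProd, Finset.prod_eq_zero (mem_univ a) (hh_of_neg ha), map_zero,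
    mul_zero]

@[to_additive]
lemma prod_Dplus {M : Type*} [CommMonoid M] (f : Fin ℓ × Fin ℓ → M) :
    ∏ p ∈ Dplus ℓ, f p = ∏ i : Fin ℓ, ∏ j ∈ Ioi i, f (i, j) := by
  rw [Dplus, prod_filter, Fintype.prod_prod_type]
  refine prod_congr rfl fun i _ => ?_
  rw [← filter_lt_eq_Ioi, prod_filter]

lemma sum_Dplus_single_snd (ℓ : ℕ) :
    ∑ p ∈ Dplus ℓ, Pi.single p.2 (1 : ℤ) = fun a : Fin ℓ => ((a : ℕ) : ℤ) := by
  funext a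
  simp [sum_Dplus, Finset.sum_apply, Finset.sum_pi_single, Finset.sum_boole, filter_gt_eq_Iio]

lemma sum_nsmul_single_perm (σ : Equiv.Perm (Fin ℓ)) :
    ∑ i : Fin ℓ, (i : ℕ) • Pi.single (σ i) (1 : ℤ) = fun a => ((σ.symm a : ℕ) : ℤ) := by
  funext a
  simp [Finset.sum_apply, Pi.single_apply, ← Equiv.symm_apply_eq]

/-- Vandermonde in the variables `x_i = R^{ε_i}`, using `1 - R_{ij} = x_j⁻¹ (x_j - x_i)`. -/
lemma prod_one_sub_raisingOp_eq_sum_perm (ℓ : ℕ) :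
    ∏ p ∈ Dplus ℓ, (1 - raisingOp p) = ∑ σ : Equiv.Perm (Fin ℓ),
      AddMonoidAlgebra.single (fun a => ((σ.symm a : ℕ) : ℤ) - (a : ℕ)) (σ.sign : ℤ) := by
  let x : Fin ℓ → RaisingAlgebra ℓ := fun i => AddMonoidAlgebra.single (Pi.single i 1) 1
  have factor : ∀ p : Fin ℓ × Fin ℓ, 1 - raisingOp p =
      AddMonoidAlgebra.single (-Pi.single p.2 1) 1 * (x p.2 - x p.1) := by
    intro p
    simp only [x, raisingOp, rootVec, mul_sub, AddMonoidAlgebra.single_mul_single, mul_one,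
      neg_add_cancel, ← AddMonoidAlgebra.one_def]
    rw [neg_add_eq_sub]
  have vandermonde : ∏ p ∈ Dplus ℓ, (x p.2 - x p.1) = ∑ σ : Equiv.Perm (Fin ℓ),
      AddMonoidAlgebra.single (fun a => ((σ.symm a : ℕ) : ℤ)) (σ.sign : ℤ) := by
    rw [prod_Dplus (fun p => x p.2 - x p.1), ← Matrix.det_vandermonde, Matrix.det_apply]
    refine sum_congr rfl fun σ _ => ?_
    simp only [x, Matrix.vandermonde_apply, AddMonoidAlgebra.single_pow, one_pow,
      AddMonoidAlgebra.prod_single, prod_const_one, sum_nsmul_single_perm, Units.smul_def,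
      AddMonoidAlgebra.smul_single, smul_eq_mul, mul_one]
  rw [prod_congr rfl fun p _ => factor p, prod_mul_distrib, vandermonde,
    AddMonoidAlgebra.prod_single, prod_const_one, sum_neg_distrib, sum_Dplus_single_snd,
    mul_sum]
  refine sum_congr rfl fun σ _ => ?_
  rw [AddMonoidAlgebra.single_mul_single, one_mul, neg_add_eq_sub]
  rfl

theorem specT1_schur (γ : Fin ℓ → ℤ) :
    specT1 (schur γ) = raisingAction γ (∏ p ∈ Dplus ℓ, (1 - raisingOp p)) := by
  rw [prod_one_sub_raisingOp_eq_sum_perm, map_sum, schur, RingHom.map_det, Matrix.det_apply]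
  refine sum_congr rfl fun σ _ => ?_
  rw [raisingAction_single, hProd, map_prod, Units.smul_def, zsmul_eq_mul]
  refine congrArg _ (Fintype.prod_equiv σ _ _ fun i => ?_)
  simp only [RingHom.mapMatrix_apply, Matrix.map_apply, Matrix.of_apply, Pi.add_apply,
    Equiv.symm_apply_apply]
  congr 2
  ring

lemma sum_rootVec_apply (S : Finset (Fin ℓ × Fin ℓ)) (a : Fin ℓ) :
    (∑ p ∈ S, rootVec p) a =
      ∑ p ∈ S, ((if p.1 = a then 1 else 0) - (if p.2 = a then 1 else 0)) := by
  simp only [Finset.sum_apply, rootVec_apply]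

theorem specT1_catalanOp (Ψ : Finset (Fin ℓ × Fin ℓ)) (γ : Fin ℓ → ℤ) (f : SymF) :
    specT1 (catalanOp Ψ γ f) =
      raisingAction γ (∏ p ∈ Dplus ℓ \ Ψ, (1 - raisingOp p)) * specT1 f := by
  simp only [raisingOp, AddMonoidAlgebra.prod_one_sub_single, map_sum, sum_mul, catalanOp]
  refine sum_congr rfl fun S _ => ?_
  simp only [map_mul, map_pow, map_neg, map_one, specT1_tC, one_pow, specT1_GJt,
    raisingAction_single, Int.cast_pow, Int.cast_neg, Int.cast_one, mul_assoc, one_mul]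
  congr 4
  funext a
  rw [Pi.add_apply, sum_rootVec_apply]

lemma rowWeight_sum_rootVec_le {s : Finset (Fin ℓ × Fin ℓ)} (hs : s ⊆ Dplus ℓ) :
    rowWeight ℓ (∑ p ∈ s, rootVec p) ≤ -#s := by
  rw [map_sum, card_eq_sum_ones, Nat.cast_sum, ← sum_neg_distrib]
  exact sum_le_sum fun p hp => by simpa using rowWeight_rootVec_le (hs hp)

lemma raisingAction_prod_one_sub_pow_mul {A B : Finset (Fin ℓ × Fin ℓ)}
    (hA : A ⊆ Dplus ℓ) (hB : B ⊆ Dplus ℓ) {γ : Fin ℓ → ℤ} {N : ℕ} (hN : rowWeight ℓ γ < N) :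
    raisingAction γ ((∏ p ∈ A, (1 - raisingOp p ^ N)) * ∏ p ∈ B, (1 - raisingOp p)) =
      raisingAction γ (∏ p ∈ B, (1 - raisingOp p)) := by
  simp only [raisingOp, AddMonoidAlgebra.single_pow, one_pow]
  rw [AddMonoidAlgebra.prod_one_sub_single, sum_mul, map_sum,
    sum_eq_single_of_mem ∅ (empty_mem_powerset A) fun U hU hU0 => ?_]
  · simp [← AddMonoidAlgebra.one_def]
  rw [AddMonoidAlgebra.prod_one_sub_single, mul_sum, map_sum]
  refine sum_eq_zero fun S hS => ?_
  rw [AddMonoidAlgebra.single_mul_single]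
  refine raisingAction_single_eq_zero ?_ _
  have hU := rowWeight_sum_rootVec_le ((mem_powerset.mp hU).trans hA)
  have hS := rowWeight_sum_rootVec_le ((mem_powerset.mp hS).trans hB)
  have hUcard : 1 ≤ #U := card_pos.mpr (nonempty_iff_ne_empty.mpr hU0)
  rw [← smul_sum, map_add, map_add, map_nsmul, nsmul_eq_mul]
  nlinarith

lemma schur_eq_zero_of_add_le_zero {γ : Fin ℓ → ℤ} {a : Fin ℓ} (ha : γ a + ℓ ≤ 0) :
    schur γ = 0 :=
  Matrix.det_eq_zero_of_row_eq_zero a fun j => hh_of_neg (by have := j.isLt; omega)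

lemma le_rowWeight_of_schur_ne_zero {γ : Fin ℓ → ℤ} {n : Fin ℓ × Fin ℓ → ℕ}
    (hn : ∀ p ∉ Dplus ℓ, n p = 0) (hs : schur (γ + ∑ p, n p • rootVec p) ≠ 0)
    (q : Fin ℓ × Fin ℓ) : (n q : ℤ) ≤ rowWeight ℓ (γ + fun _ => (ℓ : ℤ)) := by
  have hpos : 0 ≤ rowWeight ℓ (γ + ∑ p, n p • rootVec p + fun _ => (ℓ : ℤ)) :=
    rowWeight_nonneg fun a => by
      by_contra! h
      exact hs (schur_eq_zero_of_add_le_zero (a := a) (by simp only [Pi.add_apply] at h ⊢; omega))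
  have hterm : ∀ p, (n p : ℤ) * rowWeight ℓ (rootVec p) ≤ -n p := fun p => by
    by_cases hp : p ∈ Dplus ℓ
    · nlinarith [rowWeight_rootVec_le hp, (n p).cast_nonneg (α := ℤ)]
    · simp [hn p hp]
  have hsum : rowWeight ℓ (∑ p, n p • rootVec p) ≤ -n q := by
    calc _ = ∑ p, (n p : ℤ) * rowWeight ℓ (rootVec p) := by
          rw [map_sum]
          exact sum_congr rfl fun p _ => by rw [map_nsmul, nsmul_eq_mul]
      _ ≤ ∑ p, -(n p : ℤ) := sum_le_sum fun p _ => hterm p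
      _ ≤ -n q := by
        rw [sum_neg_distrib, neg_le_neg_iff]
        exact single_le_sum (f := fun p => (n p : ℤ)) (fun p _ => by positivity) (mem_univ q)
  rw [add_right_comm, map_add] at hpos
  linarith

def raisingBox (Ψ : Finset (Fin ℓ × Fin ℓ)) (N : ℕ) : Finset (Fin ℓ × Fin ℓ → ℕ) :=
  Fintype.piFinset fun p => if p ∈ Ψ then range N else {0}

lemma catalanFn_eq_sum_raisingBox {Ψ : Finset (Fin ℓ × Fin ℓ)} (hΨ : Ψ ⊆ Dplus ℓ)
    (γ : Fin ℓ → ℤ) {N : ℕ} (hN : rowWeight ℓ (γ + fun _ => (ℓ : ℤ)) < N) :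
    catalanFn Ψ γ = ∑ n ∈ raisingBox Ψ N,
      tC ^ (∑ p, n p) * schur (γ + ∑ p, n p • rootVec p) := by
  have hvec : ∀ n : Fin ℓ × Fin ℓ → ℕ, (fun a => γ a + ∑ p, (n p : ℤ) *
      ((if p.1 = a then 1 else 0) - (if p.2 = a then 1 else 0))) = γ + ∑ p, n p • rootVec p :=
    fun n => funext fun a => by simp [Finset.sum_apply, rootVec_apply]
  simp only [catalanFn, hvec]
  refine (finsum_eq_sum_of_support_subset _ fun n hn => ?_).trans
    (sum_congr rfl fun n hn => if_pos fun p hp => ?_)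
  · have hsupp : ∀ p ∉ Ψ, n p = 0 := by
      by_contra h
      exact hn (if_neg h)
    rw [Function.mem_support, if_pos hsupp] at hn
    have hs := right_ne_zero_of_mul hn
    refine Fintype.mem_piFinset.mpr fun p => ?_
    split_ifs with hp
    · have := le_rowWeight_of_schur_ne_zero (fun p hp' => hsupp p fun h => hp' (hΨ h)) hs p
      simp only [mem_range]
      omega
    · simp [hsupp p hp]
  · have := Fintype.mem_piFinset.mp hn p
    simpa [hp] using this

lemma sum_raisingBox_single (Ψ : Finset (Fin ℓ × Fin ℓ)) (N : ℕ) :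
    ∑ n ∈ raisingBox Ψ N, AddMonoidAlgebra.single (∑ p, n p • rootVec p) (1 : ℤ) =
      ∏ p ∈ Ψ, ∑ k ∈ range N, raisingOp p ^ k := by
  have hsingle : ∀ n : Fin ℓ × Fin ℓ → ℕ,
      AddMonoidAlgebra.single (∑ p, n p • rootVec p) (1 : ℤ) = ∏ p, raisingOp p ^ n p := by
    simp [raisingOp, AddMonoidAlgebra.single_pow, AddMonoidAlgebra.prod_single]
  simp only [hsingle]
  rw [raisingBox, ← prod_univ_sum]
  calc _ = ∏ p, if p ∈ Ψ then ∑ k ∈ range N, raisingOp p ^ k else 1 :=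
        prod_congr rfl fun p _ => by split_ifs <;> simp
    _ = _ := by rw [prod_ite_mem, univ_inter]

theorem specT1_catalanFn {Ψ : Finset (Fin ℓ × Fin ℓ)} (hΨ : Ψ ⊆ Dplus ℓ)
    (γ : Fin ℓ → ℤ) :
    specT1 (catalanFn Ψ γ) = raisingAction γ (∏ p ∈ Dplus ℓ \ Ψ, (1 - raisingOp p)) := by
  set N := (rowWeight ℓ (γ + fun _ => (ℓ : ℤ))).toNat + 1
  have hN : rowWeight ℓ (γ + fun _ => (ℓ : ℤ)) < N := by omega
  have hγN : rowWeight ℓ γ < N := by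
    have : 0 ≤ rowWeight ℓ fun _ => (ℓ : ℤ) := rowWeight_nonneg fun _ => Nat.cast_nonneg ℓ
    rw [map_add] at hN
    omega
  rw [catalanFn_eq_sum_raisingBox hΨ γ hN, map_sum]
  simp only [map_mul, map_pow, specT1_tC, one_pow, one_mul, specT1_schur,
    ← raisingAction_single_mul]
  rw [← map_sum, ← sum_mul, sum_raisingBox_single, ← prod_sdiff hΨ, mul_comm _ (∏ p ∈ Ψ, _),
    ← mul_assoc, ← prod_mul_distrib]
  simp only [geom_sum_mul_neg]
  exact raisingAction_prod_one_sub_pow_mul hΨ sdiff_subset hγN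

end RaisingOperators

/-- Since `π : Λ → Λ_ℤ` is surjective, `g ∈ Λ_ℤ` is written as `π f`. -/
theorem catalanOp_t1_is_mul {ℓ : ℕ} (Ψ : Finset (Fin ℓ × Fin ℓ))
    (hΨ : IsRootIdeal Ψ) (μ : Fin ℓ → ℤ) :
    ∀ f : SymF,
      specT1 (catalanOp Ψ μ f) = specT1 (catalanOp Ψ μ 1) * specT1 f ∧
      specT1 (catalanOp Ψ μ f) = specT1 (catalanFn Ψ μ) * specT1 f := by
  intro f
  rw [specT1_catalanOp, specT1_catalanOp, map_one, mul_one, specT1_catalanFn hΨ.1]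
  exact ⟨rfl, rfl⟩

end
end

section
/- Let u ∈ S_{k+1} have exactly one descent, at position j. Then the conjugate partition of θ(u) is θ(u)' = (k+1−j−Inv_1(u), k+1−j−Inv_2(u), …, k+1−j−Inv_j(u)). -/
/-! Unwinding `ζ`, the column `i` of `ζ(u)` has length `binom(k+2-i, 2) - Inv_i(u)`, so `i` occurs
`(k+1-i) + Inv_{i+1}(u) - Inv_i(u)` times in `ζ(u)`. If the only descent of `u` is at `j`, then `u`
increases on the positions `1, …, j` and on `j+1, …, k+1`; hence `Inv_i(u) = 0` for `i > j`, while
`Inv_1(u) ≤ ⋯ ≤ Inv_j(u) ≤ k+1-j` and `Inv_j(u) ≥ 1`. Reducing modulo `k+1-i` therefore deletes the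
summand `k+1-i` exactly for `i ≠ j`, and the columns of `θ(u)` telescope. -/

open scoped BigOperators Classical

noncomputable section

/-- The longest element `w₀` of `S_{k+1}` (0-based one-line notation `i ↦ k - i`). -/
def w0 (k : ℕ) : Equiv.Perm (Fin (k + 1)) := Fin.revPerm

/-- The inversion sequence: `Inv_i(v) = #{j > i : v_i > v_j}` for `1 ≤ i ≤ k+1`
(1-based positions). -/
def invOf (k : ℕ) (v : Equiv.Perm (Fin (k + 1))) (i : ℕ) : ℕ :=
  if h : 1 ≤ i ∧ i ≤ k + 1 then
    (Finset.univ.filter fun j : Fin (k + 1) =>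
      i - 1 < (j : ℕ) ∧ v j < v ⟨i - 1, by omega⟩).card
  else 0

/-- `i ∈ D(w)`: `w` has a descent at (1-based) position `i`, i.e. `w_i > w_{i+1}`. -/
def isDescent (k : ℕ) (w : Equiv.Perm (Fin (k + 1))) (i : ℕ) : Prop :=
  ∃ h : 1 ≤ i ∧ i ≤ k, w ⟨i, by omega⟩ < w ⟨i - 1, by omega⟩

/-- The length of the `i`-th column (1 ≤ i ≤ k) of the partition `ζ(w)`:
`binom(k+1-i, 2) + Inv_i(w₀ w)`. -/
def zetaCol (k : ℕ) (w : Equiv.Perm (Fin (k + 1))) (i : ℕ) : ℕ :=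
  if 1 ≤ i ∧ i ≤ k then Nat.choose (k + 1 - i) 2 + invOf k (w0 k * w) i else 0

/-- The number of parts of size `i` of `ζ(w)`. -/
def nZeta (k : ℕ) (w : Equiv.Perm (Fin (k + 1))) (i : ℕ) : ℕ :=
  zetaCol k w i - zetaCol k w (i + 1)

/-- The number of parts of size `i` of `θ(w) = ζ(w)↓`, the irreducible partition
obtained from `ζ(w)` by removing as many `k`-rectangles `R_i = (i^{k+1-i})` as
possible: the multiplicity of `i` is reduced modulo `k + 1 - i`. -/
def nTheta (k : ℕ) (w : Equiv.Perm (Fin (k + 1))) (i : ℕ) : ℕ :=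
  nZeta k w i % (k + 1 - i)

/-- The length of the `c`-th column of `θ(w)`, i.e. the number of parts of `θ(w)`
of size `≥ c`. -/
def thetaCol (k : ℕ) (w : Equiv.Perm (Fin (k + 1))) (c : ℕ) : ℕ :=
  ∑ x ∈ Finset.Icc c k, nTheta k w x

/-- The adjacent transposition `s_j ∈ S_{k+1}` swapping (1-based) positions `j, j+1`. -/
def sTrans (k : ℕ) (j : ℕ) : Equiv.Perm (Fin (k + 1)) :=
  if h : 1 ≤ j ∧ j ≤ k then Equiv.swap ⟨j - 1, by omega⟩ ⟨j, by omega⟩ else 1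

/-- The cycle `c_i = s_{k+1-i} s_{k+2-i} ⋯ s_k`. -/
def cPerm (k : ℕ) (i : ℕ) : Equiv.Perm (Fin (k + 1)) :=
  ((List.range i).map fun t => sTrans k (k + 1 - i + t)).prod

open Finset

section Inversions

variable {k i j : ℕ} {u : Equiv.Perm (Fin (k + 1))}

lemma invOf_eq_card (v : Equiv.Perm (Fin (k + 1))) (hi : 1 ≤ i) (hik : i ≤ k + 1) :
    invOf k v i = #{l ∈ Ioi (⟨i - 1, by omega⟩ : Fin (k + 1)) | v l < v ⟨i - 1, by omega⟩} := by
  rw [invOf, dif_pos ⟨hi, hik⟩]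
  congr 1
  ext l
  simp only [mem_filter, mem_univ, true_and, mem_Ioi, Fin.lt_def]

lemma invOf_w0_mul_add_invOf (v : Equiv.Perm (Fin (k + 1))) (hi : 1 ≤ i) (hik : i ≤ k + 1) :
    invOf k (w0 k * v) i + invOf k v i = k + 1 - i := by
  rw [invOf_eq_card _ hi hik, invOf_eq_card _ hi hik]
  set p : Fin (k + 1) := ⟨i - 1, by omega⟩
  have hrev : #{l ∈ Ioi p | (w0 k * v) l < (w0 k * v) p} = #{l ∈ Ioi p | ¬ v l < v p} := by
    refine congrArg card (filter_congr fun l hl => ?_)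
    have hne : v l ≠ v p := v.injective.ne (mem_Ioi.1 hl).ne'
    simp only [w0, Equiv.Perm.mul_apply, Fin.revPerm_apply, Fin.rev_lt_rev, not_lt]
    exact ⟨le_of_lt, fun h => lt_of_le_of_ne h hne.symm⟩
  rw [hrev, add_comm, card_filter_add_card_filter_not, Fin.card_Ioi]
  simp only [p]
  omega

lemma apply_le_apply_of_forall_not_isDescent {a b : Fin (k + 1)} (hab : a ≤ b)
    (h : ∀ m, (a : ℕ) < m → m ≤ b → ¬ isDescent k u m) : u a ≤ u b := by
  obtain ⟨b, hb⟩ := b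
  replace hab : (a : ℕ) ≤ b := hab
  revert hb h
  induction b, hab using Nat.le_induction with
  | base => exact fun _ _ => le_rfl
  | succ b hab ih =>
    intro hb h
    have hstep : ¬ u ⟨b + 1, hb⟩ < u ⟨b, by omega⟩ :=
      fun hlt => h (b + 1) (by omega) le_rfl ⟨⟨by omega, by omega⟩, hlt⟩
    exact (ih (by omega) fun m h1 h2 => h m h1 (by dsimp only at h2 ⊢; omega)).trans
      (not_lt.1 hstep)

lemma invOf_le_of_forall_not_isDescent (hi : 1 ≤ i) (hij : i ≤ j) (hjk : j ≤ k + 1)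
    (h : ∀ m, i ≤ m → m < j → ¬ isDescent k u m) : invOf k u i ≤ k + 1 - j := by
  rw [invOf_eq_card u hi (by omega)]
  calc _ ≤ #(Ioi (⟨j - 1, by omega⟩ : Fin (k + 1))) := by
        refine card_le_card fun l hl => ?_
        obtain ⟨hpl, hlt⟩ := mem_filter.1 hl
        rw [mem_Ioi, Fin.lt_def] at hpl ⊢
        by_contra hlj
        refine hlt.not_ge (apply_le_apply_of_forall_not_isDescent (Fin.le_def.2 hpl.le) ?_)
        dsimp only at hpl hlj
        exact fun m hm hml => h m (by dsimp only at hm; omega) (by omega)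
    _ = k + 1 - j := by simp only [Fin.card_Ioi]; omega

lemma invOf_le_invOf_succ_of_not_isDescent (hi : 1 ≤ i) (hik : i ≤ k) (h : ¬ isDescent k u i) :
    invOf k u i ≤ invOf k u (i + 1) := by
  rw [invOf_eq_card u hi (by omega), invOf_eq_card u (by omega) (by omega)]
  have hasc : u ⟨i - 1, by omega⟩ ≤ u ⟨i, by omega⟩ := not_lt.1 fun hlt => h ⟨⟨hi, hik⟩, hlt⟩
  refine card_le_card fun l hl => ?_
  obtain ⟨hpl, hlt⟩ := mem_filter.1 hl
  have hli : l ≠ ⟨i, by omega⟩ := fun he => (he ▸ hlt).not_ge hasc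
  refine mem_filter.2 ⟨mem_Ioi.2 ?_, hlt.trans_le hasc⟩
  simp only [mem_Ioi, Fin.lt_def, Fin.ext_iff, ne_eq] at hpl hli ⊢
  omega

lemma one_le_invOf_of_isDescent (h : isDescent k u i) : 1 ≤ invOf k u i := by
  obtain ⟨⟨hi, hik⟩, hlt⟩ := h
  rw [invOf_eq_card u hi (by omega), Nat.one_le_iff_ne_zero, ← pos_iff_ne_zero, card_pos]
  exact ⟨⟨i, by omega⟩, mem_filter.2 ⟨mem_Ioi.2 (Fin.lt_def.2 (by dsimp only; omega)), hlt⟩⟩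

end Inversions

section Columns

variable {k i : ℕ} (w : Equiv.Perm (Fin (k + 1)))

lemma zetaCol_eq (hi : 1 ≤ i) (hik : i ≤ k + 1) :
    zetaCol k w i = (k + 1 - i).choose 2 + invOf k (w0 k * w) i := by
  rcases hik.lt_or_eq with hik | rfl
  · exact if_pos ⟨hi, by omega⟩
  · have := invOf_w0_mul_add_invOf w hi le_rfl
    rw [zetaCol, if_neg (by omega), Nat.sub_self, Nat.choose_zero_succ]
    omega

lemma nZeta_add_invOf (hi : 1 ≤ i) (hik : i ≤ k) :
    nZeta k w i + invOf k w i = (k + 1 - i) + invOf k w (i + 1) := by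
  have h := invOf_w0_mul_add_invOf w hi (by omega)
  have h' := invOf_w0_mul_add_invOf w (i := i + 1) (by omega) (by omega)
  have hchoose : (k + 1 - i).choose 2 = (k - i).choose 2 + (k - i) := by
    rw [show k + 1 - i = k - i + 1 by omega, Nat.choose_succ_succ', Nat.choose_one_right,
      add_comm]
  rw [nZeta, zetaCol_eq w hi (by omega), zetaCol_eq w (by omega) (by omega),
    Nat.add_sub_add_right]
  omega

lemma thetaCol_eq_nTheta_add (hi : i ≤ k) :
    thetaCol k w i = nTheta k w i + thetaCol k w (i + 1) := by
  rw [thetaCol, thetaCol, ← insert_Icc_add_one_left_eq_Icc hi, sum_insert (by simp)]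

lemma thetaCol_eq_of_nTheta_add {g : ℕ → ℕ} (hg : ∀ c, k < c → g c = 0)
    (hstep : ∀ i, 1 ≤ i → i ≤ k → nTheta k w i + g (i + 1) = g i) {c : ℕ} (hc : 1 ≤ c) :
    thetaCol k w c = g c := by
  induction hd : k + 1 - c generalizing c with
  | zero => rw [thetaCol, Icc_eq_empty (by omega), sum_empty, hg c (by omega)]
  | succ d ih =>
    rw [thetaCol_eq_nTheta_add w (by omega), ih (by omega) (by omega), hstep c hc (by omega)]

end Columns

section SingleDescent

variable {k i j : ℕ} {u : Equiv.Perm (Fin (k + 1))}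

def singleDescentCol (k : ℕ) (u : Equiv.Perm (Fin (k + 1))) (j c : ℕ) : ℕ :=
  if c ≤ j then k + 1 - j - invOf k u c else 0

lemma invOf_le_of_unique_descent (huniq : ∀ i, isDescent k u i → i = j) (hi : 1 ≤ i)
    (hij : i ≤ j) (hjk : j ≤ k + 1) : invOf k u i ≤ k + 1 - j :=
  invOf_le_of_forall_not_isDescent hi hij hjk fun m _ hmj hd => hmj.ne (huniq m hd)

lemma invOf_eq_zero_of_unique_descent (huniq : ∀ i, isDescent k u i → i = j) (hji : j < i)
    (hik : i ≤ k + 1) : invOf k u i = 0 :=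
  Nat.le_zero.1 <| (invOf_le_of_forall_not_isDescent (by omega) hik le_rfl
    fun m him _ hd => (hji.trans_le him).ne' (huniq m hd)).trans_eq (Nat.sub_self _)

lemma nTheta_add_singleDescentCol_succ (hj : isDescent k u j)
    (huniq : ∀ i, isDescent k u i → i = j) (hi : 1 ≤ i) (hik : i ≤ k) :
    nTheta k u i + singleDescentCol k u j (i + 1) = singleDescentCol k u j i := by
  have hz := nZeta_add_invOf u hi hik
  have hmod : ∀ d t, d < k + 1 - i → nZeta k u i = d + (k + 1 - i) * t → nTheta k u i = d :=
    fun d t hd h => by rw [nTheta, h, Nat.add_mul_mod_self_left, Nat.mod_eq_of_lt hd]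
  simp only [singleDescentCol]
  rcases lt_trichotomy i j with hij | rfl | hji
  · have hmono : invOf k u i ≤ invOf k u (i + 1) :=
      invOf_le_invOf_succ_of_not_isDescent hi hik fun hd => hij.ne (huniq i hd)
    have hbound : invOf k u (i + 1) ≤ k + 1 - j :=
      invOf_le_of_unique_descent huniq (by omega) hij (Nat.le_succ_of_le hj.1.2)
    have := hmod (invOf k u (i + 1) - invOf k u i) 1 (by omega) (by omega)
    split_ifs <;> omega
  · have hpos := one_le_invOf_of_isDescent hj
    have hnext := invOf_eq_zero_of_unique_descent huniq (lt_add_one i) (by omega)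
    have := hmod (k + 1 - i - invOf k u i) 0 (by omega) (by omega)
    split_ifs <;> omega
  · have hcur := invOf_eq_zero_of_unique_descent huniq hji (by omega)
    have hnext := invOf_eq_zero_of_unique_descent huniq (hji.trans (lt_add_one i)) (by omega)
    have := hmod 0 1 (by omega) (by omega)
    split_ifs <;> omega

end SingleDescent

theorem thetaCol_of_single_descent_general (k : ℕ)
    (u : Equiv.Perm (Fin (k + 1))) (j : ℕ)
    (hj : isDescent k u j) (huniq : ∀ i, isDescent k u i → i = j) :
    (∀ c, 1 ≤ c → c ≤ j →
      (thetaCol k u c : ℤ) = (k : ℤ) + 1 - j - (invOf k u c : ℤ)) ∧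
    (∀ c, j < c → thetaCol k u c = 0) := by
  have hjk := hj.1.2
  have hcol : ∀ c, 1 ≤ c → thetaCol k u c = singleDescentCol k u j c := fun c hc =>
    thetaCol_eq_of_nTheta_add u (fun c hkc => by rw [singleDescentCol, if_neg (by omega)])
      (fun i hi hik => nTheta_add_singleDescentCol_succ hj huniq hi hik) hc
  refine ⟨fun c hc hcj => ?_, fun c hjc => ?_⟩
  · have := invOf_le_of_unique_descent huniq hc hcj (by omega)
    rw [hcol c hc, singleDescentCol, if_pos hcj]
    omega
  · rw [hcol c (by omega), singleDescentCol, if_neg (by omega)]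

/-- Let `u ∈ S_{k+1}` have exactly one descent, at position
`j`.  Then the conjugate partition of `θ(u)` is
`θ(u)' = (k+1-j-Inv_1(u), k+1-j-Inv_2(u), …, k+1-j-Inv_j(u))`
(in particular its columns of index `> j` are empty). -/
theorem thetaCol_of_single_descent (k : ℕ) (hk : 1 ≤ k)
    (u : Equiv.Perm (Fin (k + 1))) (j : ℕ)
    (hj : isDescent k u j) (huniq : ∀ i, isDescent k u i → i = j) :
    (∀ c, 1 ≤ c → c ≤ j →
      (thetaCol k u c : ℤ) = (k : ℤ) + 1 - j - (invOf k u c : ℤ)) ∧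
    (∀ c, j < c → thetaCol k u c = 0) :=
  thetaCol_of_single_descent_general k u j hj huniq

end
end
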